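/- arXiv:2010.12182 — 2 statements merged into one kernel-verified Lean document; each statement's English description precedes it below -/
import Mathlib

section
/- Let Γ ≤ C₄ × D_{n₂} × D_{n₃} be a 2-injective 3-factor subdirect product with n₂ > 2 and n₃ > 2. Then n₂ = n₃ = 4 and Γ is isomorphic (as a group) to Δ ∩ (rot(D₄) × D₄ × D₄), where Δ is the double CFI group and rot(D₄) is the subgroup of rotations of D₄. -/
/-- `Γ ≤ G₁ × G₂ × G₃` is a (3-factor) subdirect product:
the projection to each factor is surjective on `Γ`. -/
def IsSubdirect3 {G₁ G₂ G₃ : Type*} [Group G₁] [Group G₂] [Group G₃]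
    (Γ : Subgroup (G₁ × G₂ × G₃)) : Prop :=
  (∀ x : G₁, ∃ g ∈ Γ, g.1 = x) ∧ (∀ x : G₂, ∃ g ∈ Γ, g.2.1 = x) ∧
    (∀ x : G₃, ∃ g ∈ Γ, g.2.2 = x)

/-- `Γ ≤ G₁ × G₂ × G₃` is 2-injective: for each `i`, the projection of `Γ` onto
the product of the two factors other than `Gᵢ` is injective on `Γ`. -/
def IsTwoInjective3 {G₁ G₂ G₃ : Type*} [Group G₁] [Group G₂] [Group G₃]
    (Γ : Subgroup (G₁ × G₂ × G₃)) : Prop :=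
  (∀ g ∈ Γ, ∀ h ∈ Γ, g.2.1 = h.2.1 → g.2.2 = h.2.2 → g = h) ∧
  (∀ g ∈ Γ, ∀ h ∈ Γ, g.1 = h.1 → g.2.2 = h.2.2 → g = h) ∧
  (∀ g ∈ Γ, ∀ h ∈ Γ, g.1 = h.1 → g.2.1 = h.2.1 → g = h)

open DihedralGroup in
/-- An element of `Dₙ` is a rotation if it lies in the cyclic subgroup of
rotations `{r i}`; the identity counts as a rotation. -/
def IsRotation {n : ℕ} (x : DihedralGroup n) : Prop := ∃ i, x = r i

open DihedralGroup in
/-- An element of `Dₙ` is a reflection if it is of the form `sr i`. -/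
def IsReflection {n : ℕ} (x : DihedralGroup n) : Prop := ∃ i, x = sr i

/-- A subgroup of a product of three dihedral groups is a rotate-or-reflect group if every
element is either a rotation in all components or a reflection in all components. -/
def IsRotateOrReflect3 {n₁ n₂ n₃ : ℕ}
    (Γ : Subgroup (DihedralGroup n₁ × DihedralGroup n₂ × DihedralGroup n₃)) : Prop :=
  ∀ g ∈ Γ, (IsRotation g.1 ∧ IsRotation g.2.1 ∧ IsRotation g.2.2) ∨
    (IsReflection g.1 ∧ IsReflection g.2.1 ∧ IsReflection g.2.2)

/-- A subgroup of a product of two dihedral groups is a rotate-or-reflect group if every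
element is either a rotation in both components or a reflection in both components. -/
def IsRotateOrReflect2 {n₁ n₂ : ℕ}
    (Γ : Subgroup (DihedralGroup n₁ × DihedralGroup n₂)) : Prop :=
  ∀ g ∈ Γ, (IsRotation g.1 ∧ IsRotation g.2) ∨ (IsReflection g.1 ∧ IsReflection g.2)

open DihedralGroup in
/-- The double CFI group `Δ = ⟨(1,α,α), (α,1,α), (ρ,ρ,β)⟩ ≤ D₄ × D₄ × D₄`, where
`ρ = r 1` is a rotation of order 4, `α = sr 0` and `α' = sr 2` are the two reflections
with `α * α' = ρ²`, and `β = sr 1 ∉ {α, α'}` is a reflection. -/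
def doubleCFI : Subgroup (DihedralGroup 4 × DihedralGroup 4 × DihedralGroup 4) :=
  Subgroup.closure {(1, sr 0, sr 0), (sr 0, 1, sr 0), (r 1, r 1, sr 1)}

open DihedralGroup in
/-- The subgroup `rot(D₄)` of rotations of `D₄`. -/
def rotD4 : Subgroup (DihedralGroup 4) where
  carrier := {x | IsRotation x}
  one_mem' := ⟨0, one_def⟩
  mul_mem' := by
    rintro a b ⟨i, rfl⟩ ⟨j, rfl⟩
    exact ⟨i + j, r_mul_r i j⟩
  inv_mem' := by
    rintro a ⟨i, rfl⟩
    exact ⟨-i, rfl⟩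

/-!
Fix `g ∈ Γ` over the generator `c` of `C₄`. As `C₄` is abelian, commutators of elements of `Γ`
are trivial in the first factor, so by 2-injectivity two elements of `Γ` commute in one dihedral
factor iff they commute in the other. Also, an element of `Γ` that squares to 1 in both dihedral
factors squares to 1 in `C₄`; this applies to double reflections, and to the product of a double
rotation with its conjugate by a double reflection. Hence `g` is a rotation in one dihedral
factor and a reflection in the other, and commuting rotations past such mixed elements shows
that, for a fixed `f`, every `j : ZMod n₃` satisfies `2j = 0` or `2(f + j) = 0`, which forces
`n₃ = 4`; symmetrically `n₂ = 4`.

Now let `n₂ = n₃ = 4` and, swapping the dihedral factors if needed, `g = (c, r p, sr q)`. The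
kernel of the first projection on `Γ` is `{1, m, k, m k}`, with `k` a double reflection and
`m = (1, r 2, r 2) = g² (k g)²`, so `Γ = ⟨g, k⟩`. Identifying `C₄` with `rot(D₄)` and applying
affine automorphisms `r i ↦ r (t i), sr i ↦ sr (t i + s)` of the dihedral factors sends `g, k`
to `(ρ, ρ, β), (1, α, α)`, which generate `Δ ∩ (rot(D₄) × D₄ × D₄)`.
-/

open DihedralGroup Multiplicative
open scoped commutatorElement

namespace DihedralGroup

variable {n : ℕ}

theorem commute_r_r (i j : ZMod n) : Commute (r i) (r j) := by
  rw [Commute, SemiconjBy, r_mul_r, r_mul_r, add_comm]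

theorem commute_r_sr_iff (i j : ZMod n) : Commute (r i) (sr j) ↔ i + i = 0 := by
  rw [Commute, SemiconjBy, r_mul_sr, sr_mul_r, sr.injEq, sub_eq_iff_eq_add, add_assoc,
    left_eq_add, add_comm]

theorem r_sq (i : ZMod n) : r i ^ 2 = r (i + i) := by
  rw [sq, r_mul_r]

theorem sr_sq (i : ZMod n) : sr i ^ 2 = 1 := by
  rw [sq, sr_mul_self]

def affine (t c : ZMod n) : DihedralGroup n →* DihedralGroup n where
  toFun
    | r i => r (t * i)
    | sr i => sr (t * i + c)
  map_one' := congrArg r (mul_zero t)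
  map_mul' := by
    rintro (i | i) (j | j) <;>
      simp only [r_mul_r, r_mul_sr, sr_mul_r, sr_mul_sr, r.injEq, sr.injEq] <;> ring

@[simp] theorem affine_r (t c i : ZMod n) : affine t c (r i) = r (t * i) := rfl

@[simp] theorem affine_sr (t c i : ZMod n) : affine t c (sr i) = sr (t * i + c) := rfl

theorem affine_injective {t : ZMod n} (ht : IsUnit t) (c : ZMod n) :
    Function.Injective (affine t c) := by
  rintro (i | i) (j | j) hij <;>
    simp only [affine_r, affine_sr, r.injEq, sr.injEq, add_left_inj, reduceCtorEq] at hij ⊢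
  exacts [ht.mul_left_cancel hij, ht.mul_left_cancel hij]

def rHom : Multiplicative (ZMod n) →* DihedralGroup n where
  toFun x := r x.toAdd
  map_one' := rfl
  map_mul' _ _ := (r_mul_r _ _).symm

theorem rHom_injective : Function.Injective (rHom : Multiplicative (ZMod n) →* DihedralGroup n) :=
  fun _ _ hxy ↦ r.inj hxy

end DihedralGroup

theorem Multiplicative.exists_mul_ofAdd_one_pow_eq_one {n : ℕ} [NeZero n]
    (t : Multiplicative (ZMod n)) : ∃ k : ℕ, t * ofAdd 1 ^ k = 1 :=
  ⟨(-t.toAdd).val, by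
    rw [← ofAdd_nsmul, nsmul_one, ZMod.natCast_zmod_val, ofAdd_neg, ofAdd_toAdd, mul_inv_cancel]⟩

theorem ZMod.eq_four_of_forall_add_self {n : ℕ} (hn : 2 < n) (f : ZMod n)
    (h : ∀ j : ZMod n, j + j = 0 ∨ (f + j) + (f + j) = 0) : n = 4 := by
  have h2 : (2 : ZMod n) ≠ 0 := by
    intro h0
    have hdvd := (ZMod.natCast_eq_zero_iff 2 n).mp (by exact_mod_cast h0)
    exact absurd (Nat.le_of_dvd two_pos hdvd) (by omega)
  have h1 : (f + 1) + (f + 1) = 0 := (h 1).resolve_left (by rwa [one_add_one_eq_two])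
  have h4 : ((4 : ℕ) : ZMod n) = 0 := by
    rcases h 2 with h' | h'
    · push_cast
      linear_combination h'
    · exact absurd (by linear_combination h' - h1) h2
  have hdvd := (ZMod.natCast_eq_zero_iff 4 n).mp h4
  have hle := Nat.le_of_dvd four_pos hdvd
  interval_cases n <;> omega

section Swap

variable {G₁ G₂ G₃ : Type*} [Group G₁] [Group G₂] [Group G₃] {Γ : Subgroup (G₁ × G₂ × G₃)}

variable (G₁ G₂ G₃) in
def swapSndThd : G₁ × G₂ × G₃ ≃* G₁ × G₃ × G₂ :=
  (MulEquiv.refl G₁).prodCongr MulEquiv.prodComm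

theorem mem_map_swapSndThd {x : G₁ × G₃ × G₂} :
    x ∈ Γ.map (swapSndThd G₁ G₂ G₃).toMonoidHom ↔ (x.1, x.2.2, x.2.1) ∈ Γ :=
  Subgroup.mem_map_equiv

theorem IsSubdirect3.map_swapSndThd (h : IsSubdirect3 Γ) :
    IsSubdirect3 (Γ.map (swapSndThd G₁ G₂ G₃).toMonoidHom) := by
  refine ⟨fun x ↦ ?_, fun x ↦ ?_, fun x ↦ ?_⟩
  · obtain ⟨g, hg, rfl⟩ := h.1 x
    exact ⟨_, Subgroup.mem_map_of_mem _ hg, rfl⟩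
  · obtain ⟨g, hg, rfl⟩ := h.2.2 x
    exact ⟨_, Subgroup.mem_map_of_mem _ hg, rfl⟩
  · obtain ⟨g, hg, rfl⟩ := h.2.1 x
    exact ⟨_, Subgroup.mem_map_of_mem _ hg, rfl⟩

theorem IsTwoInjective3.map_swapSndThd (h : IsTwoInjective3 Γ) :
    IsTwoInjective3 (Γ.map (swapSndThd G₁ G₂ G₃).toMonoidHom) := by
  have hinj := (swapSndThd G₁ G₂ G₃).symm.injective
  refine ⟨fun g hg g' hg' e₂ e₃ ↦ hinj ?_, fun g hg g' hg' e₁ e₃ ↦ hinj ?_,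
    fun g hg g' hg' e₁ e₂ ↦ hinj ?_⟩
  · exact h.1 _ (mem_map_swapSndThd.mp hg) _ (mem_map_swapSndThd.mp hg') e₃ e₂
  · exact h.2.2 _ (mem_map_swapSndThd.mp hg) _ (mem_map_swapSndThd.mp hg') e₁ e₃
  · exact h.2.1 _ (mem_map_swapSndThd.mp hg) _ (mem_map_swapSndThd.mp hg') e₁ e₂

end Swap

namespace IsTwoInjective3

variable {G₁ G₂ G₃ : Type*} [Group G₂] [Group G₃]

section

variable [Group G₁] {Γ : Subgroup (G₁ × G₂ × G₃)}

theorem fst_eq_one (h : IsTwoInjective3 Γ) {g : G₁ × G₂ × G₃} (hg : g ∈ Γ) (h₂ : g.2.1 = 1)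
    (h₃ : g.2.2 = 1) : g.1 = 1 :=
  congrArg Prod.fst (h.1 g hg 1 Γ.one_mem h₂ h₃)

theorem snd_fst_eq_one (h : IsTwoInjective3 Γ) {g : G₁ × G₂ × G₃} (hg : g ∈ Γ) (h₁ : g.1 = 1)
    (h₃ : g.2.2 = 1) : g.2.1 = 1 :=
  congrArg (·.2.1) (h.2.1 g hg 1 Γ.one_mem h₁ h₃)

theorem snd_snd_eq_one (h : IsTwoInjective3 Γ) {g : G₁ × G₂ × G₃} (hg : g ∈ Γ) (h₁ : g.1 = 1)
    (h₂ : g.2.1 = 1) : g.2.2 = 1 :=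
  congrArg (·.2.2) (h.2.2 g hg 1 Γ.one_mem h₁ h₂)

theorem sq_fst_eq_one (h : IsTwoInjective3 Γ) {g : G₁ × G₂ × G₃} (hg : g ∈ Γ)
    (h₂ : g.2.1 ^ 2 = 1) (h₃ : g.2.2 ^ 2 = 1) : g.1 ^ 2 = 1 :=
  h.fst_eq_one (pow_mem hg 2) h₂ h₃

end

variable [CommGroup G₁] {Γ : Subgroup (G₁ × G₂ × G₃)}

theorem commute_snd_snd (h : IsTwoInjective3 Γ) {g g' : G₁ × G₂ × G₃} (hg : g ∈ Γ)
    (hg' : g' ∈ Γ) (hc : Commute g.2.1 g'.2.1) : Commute g.2.2 g'.2.2 := by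
  have hmem : ⁅g, g'⁆ ∈ Γ := by
    rw [commutatorElement_def]
    exact mul_mem (mul_mem (mul_mem hg hg') (inv_mem hg)) (inv_mem hg')
  rw [← commutatorElement_eq_one_iff_commute] at hc ⊢
  exact h.snd_snd_eq_one hmem (commutatorElement_eq_one_iff_commute.mpr (.all _ _)) hc

theorem commute_snd_fst (h : IsTwoInjective3 Γ) {g g' : G₁ × G₂ × G₃} (hg : g ∈ Γ)
    (hg' : g' ∈ Γ) (hc : Commute g.2.2 g'.2.2) : Commute g.2.1 g'.2.1 :=
  h.map_swapSndThd.commute_snd_snd (Subgroup.mem_map_of_mem _ hg)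
    (Subgroup.mem_map_of_mem _ hg') hc

end IsTwoInjective3

section Dihedral

variable {A : Type*} {n₂ n₃ : ℕ}

namespace IsSubdirect3

variable [Group A] {Γ : Subgroup (A × DihedralGroup n₂ × DihedralGroup n₃)}

theorem exists_sr_sr_mem (hsd : IsSubdirect3 Γ) : ∃ x u v, (x, sr u, sr v) ∈ Γ := by
  obtain ⟨⟨x, y, z⟩, hg, rfl⟩ := hsd.2.1 (sr 0)
  obtain ⟨⟨x', y', z'⟩, hg', rfl⟩ := hsd.2.2 (sr 0)
  rcases z with v | v
  · rcases y' with u | u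
    · have hmul := mul_mem hg hg'
      simp only [Prod.mk_mul_mk, sr_mul_r, r_mul_sr] at hmul
      exact ⟨_, _, _, hmul⟩
    · exact ⟨_, _, _, hg'⟩
  · exact ⟨_, _, _, hg⟩

theorem exists_sr_r_mem_of_r_sr_mem (hsd : IsSubdirect3 Γ) {x : A} {p : ZMod n₂}
    {q : ZMod n₃} (hg : (x, r p, sr q) ∈ Γ) : ∃ y e f, (y, sr e, r f) ∈ Γ := by
  obtain ⟨⟨y, z, w⟩, hh, rfl⟩ := hsd.2.1 (sr 0)
  rcases w with f | f
  · exact ⟨_, _, _, hh⟩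
  · have hmul := mul_mem hh hg
    simp only [Prod.mk_mul_mk, sr_mul_r, sr_mul_sr] at hmul
    exact ⟨_, _, _, hmul⟩

theorem exists_r_sr_mem_of_sr_r_mem (hsd : IsSubdirect3 Γ) {x : A} {e : ZMod n₂}
    {f : ZMod n₃} (hg : (x, sr e, r f) ∈ Γ) : ∃ y p q, (y, r p, sr q) ∈ Γ := by
  obtain ⟨y, q, p, hh⟩ :=
    hsd.map_swapSndThd.exists_sr_r_mem_of_r_sr_mem (mem_map_swapSndThd.mpr hg)
  exact ⟨y, p, q, mem_map_swapSndThd.mp hh⟩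

end IsSubdirect3

namespace IsTwoInjective3

section

variable [Group A] {Γ : Subgroup (A × DihedralGroup n₂ × DihedralGroup n₃)}

theorem sq_eq_one_of_sr_sr_mem (h : IsTwoInjective3 Γ) {x : A} {u : ZMod n₂} {v : ZMod n₃}
    (hg : (x, sr u, sr v) ∈ Γ) : x ^ 2 = 1 :=
  h.sq_fst_eq_one hg (sr_sq u) (sr_sq v)

theorem sq_eq_one_of_r_sr_mem (h : IsTwoInjective3 Γ) {x : A} {p : ZMod n₂} {q : ZMod n₃}
    (hg : (x, r p, sr q) ∈ Γ) (hp : p + p = 0) : x ^ 2 = 1 :=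
  h.sq_fst_eq_one hg (by rw [r_sq, hp, r_zero]) (sr_sq q)

theorem sq_eq_one_of_sr_r_mem (h : IsTwoInjective3 Γ) {x : A} {q : ZMod n₂} {p : ZMod n₃}
    (hg : (x, sr q, r p) ∈ Γ) (hp : p + p = 0) : x ^ 2 = 1 :=
  h.sq_fst_eq_one hg (sr_sq q) (by rw [r_sq, hp, r_zero])

theorem one_sr_r_notMem (h : IsTwoInjective3 Γ) {x : A} {p : ZMod n₂} {q : ZMod n₃}
    (hg : (x, r p, sr q) ∈ Γ) (hx : x ^ 2 ≠ 1) (u : ZMod n₂) (v : ZMod n₃) :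
    (1, sr u, r v) ∉ Γ := fun hγ ↦ by
  have hmul := mul_mem hγ hg
  simp only [Prod.mk_mul_mk, one_mul, sr_mul_r, r_mul_sr] at hmul
  exact hx (h.sq_eq_one_of_sr_sr_mem hmul)

end

variable [CommGroup A] {Γ : Subgroup (A × DihedralGroup n₂ × DihedralGroup n₃)}

theorem sq_eq_one_of_r_r_mem (h : IsTwoInjective3 Γ) (hsd : IsSubdirect3 Γ) {x : A}
    {u : ZMod n₂} {v : ZMod n₃} (hg : (x, r u, r v) ∈ Γ) : x ^ 2 = 1 := by
  obtain ⟨y, i, j, hs⟩ := hsd.exists_sr_sr_mem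
  have hmem := mul_mem hg (mul_mem hs (mul_mem hg (inv_mem hs)))
  simp only [Prod.inv_mk, Prod.mk_mul_mk, inv_sr, r_mul_sr, sr_mul_sr, r_mul_r] at hmem
  have hx := h.fst_eq_one hmem (by simp) (by simp)
  rwa [mul_inv_cancel_comm_assoc, ← sq] at hx

theorem one_r_sr_notMem (h : IsTwoInjective3 Γ) (hsd : IsSubdirect3 Γ) {x : A} {p : ZMod n₂}
    {q : ZMod n₃} (hg : (x, r p, sr q) ∈ Γ) (hx : x ^ 2 ≠ 1) (u : ZMod n₂) (v : ZMod n₃) :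
    (1, r u, sr v) ∉ Γ := fun hγ ↦ by
  have hmul := mul_mem hγ hg
  simp only [Prod.mk_mul_mk, one_mul, r_mul_r, sr_mul_sr] at hmul
  exact hx (h.sq_eq_one_of_r_r_mem hsd hmul)

theorem add_self_eq_zero_of_r_sr_mem_of_r_r_mem (h : IsTwoInjective3 Γ) {x y : A}
    {p u : ZMod n₂} {q v : ZMod n₃} (hg : (x, r p, sr q) ∈ Γ) (hg' : (y, r u, r v) ∈ Γ) :
    v + v = 0 :=
  (commute_r_sr_iff v q).mp (h.commute_snd_snd hg' hg (commute_r_r u p))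

theorem add_self_eq_zero_of_sr_r_mem_of_r_r_mem (h : IsTwoInjective3 Γ) {x y : A}
    {q u : ZMod n₂} {p v : ZMod n₃} (hg : (x, sr q, r p) ∈ Γ) (hg' : (y, r u, r v) ∈ Γ) :
    u + u = 0 :=
  (commute_r_sr_iff u q).mp (h.commute_snd_fst hg' hg (commute_r_r v p))

theorem n₃_eq_four (h : IsTwoInjective3 Γ) (hsd : IsSubdirect3 Γ) (h₃ : 2 < n₃) {x y : A}
    {p e : ZMod n₂} {q f : ZMod n₃} (hA : (x, r p, sr q) ∈ Γ) (hB : (y, sr e, r f) ∈ Γ) :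
    n₃ = 4 := by
  refine ZMod.eq_four_of_forall_add_self h₃ f fun j ↦ ?_
  obtain ⟨⟨z, w, _⟩, hg, rfl⟩ := hsd.2.2 (r j)
  rcases w with u | u
  · exact .inl (h.add_self_eq_zero_of_r_sr_mem_of_r_r_mem hA hg)
  · have hmul := mul_mem hB hg
    simp only [Prod.mk_mul_mk, sr_mul_sr, r_mul_r] at hmul
    exact .inr (h.add_self_eq_zero_of_r_sr_mem_of_r_r_mem hA hmul)

theorem n₂_eq_four (h : IsTwoInjective3 Γ) (hsd : IsSubdirect3 Γ) (h₂ : 2 < n₂) {x y : A}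
    {p e : ZMod n₂} {q f : ZMod n₃} (hA : (x, r p, sr q) ∈ Γ) (hB : (y, sr e, r f) ∈ Γ) :
    n₂ = 4 :=
  h.map_swapSndThd.n₃_eq_four hsd.map_swapSndThd h₂ (mem_map_swapSndThd.mpr hB)
    (mem_map_swapSndThd.mpr hA)

theorem eq_four_and_exists_mixed_mem (h : IsTwoInjective3 Γ) (hsd : IsSubdirect3 Γ)
    (h₂ : 2 < n₂) (h₃ : 2 < n₃) {x : A} (hx : x ^ 2 ≠ 1) :
    n₂ = 4 ∧ n₃ = 4 ∧ ((∃ p q, (x, r p, sr q) ∈ Γ) ∨ ∃ q p, (x, sr q, r p) ∈ Γ) := by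
  obtain ⟨⟨_, y, z⟩, hg, rfl⟩ := hsd.1 x
  rcases y with p | q <;> rcases z with p' | q'
  · exact absurd (h.sq_eq_one_of_r_r_mem hsd hg) hx
  · obtain ⟨_, _, _, hB⟩ := hsd.exists_sr_r_mem_of_r_sr_mem hg
    exact ⟨h.n₂_eq_four hsd h₂ hg hB, h.n₃_eq_four hsd h₃ hg hB, .inl ⟨p, q', hg⟩⟩
  · obtain ⟨_, _, _, hA⟩ := hsd.exists_r_sr_mem_of_sr_r_mem hg
    exact ⟨h.n₂_eq_four hsd h₂ hA hg, h.n₃_eq_four hsd h₃ hA hg, .inr ⟨q, p', hg⟩⟩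
  · exact absurd (h.sq_eq_one_of_sr_sr_mem hg) hx

end IsTwoInjective3

end Dihedral

theorem ofAdd_one_zmod_four_sq_ne_one : (ofAdd 1 : Multiplicative (ZMod 4)) ^ 2 ≠ 1 := by
  decide

namespace IsTwoInjective3

variable {Γ : Subgroup (Multiplicative (ZMod 4) × DihedralGroup 4 × DihedralGroup 4)}
  {p q a b : ZMod 4}

theorem add_self_eq_two_of_r_sr_mem (h : IsTwoInjective3 Γ) (hg : (ofAdd 1, r p, sr q) ∈ Γ) :
    p + p = 2 := by
  rcases (by decide : ∀ z : ZMod 4, z + z = 0 ∨ z + z = 2) p with hp | hp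
  · exact absurd (h.sq_eq_one_of_r_sr_mem hg hp) ofAdd_one_zmod_four_sq_ne_one
  · exact hp

theorem add_self_eq_two_of_sr_r_mem (h : IsTwoInjective3 Γ) (hg : (ofAdd 1, sr q, r p) ∈ Γ) :
    p + p = 2 := by
  rcases (by decide : ∀ z : ZMod 4, z + z = 0 ∨ z + z = 2) p with hp | hp
  · exact absurd (h.sq_eq_one_of_sr_r_mem hg hp) ofAdd_one_zmod_four_sq_ne_one
  · exact hp

theorem exists_one_sr_sr_mem (h : IsTwoInjective3 Γ) (hsd : IsSubdirect3 Γ)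
    (hg : (ofAdd 1, r p, sr q) ∈ Γ) : ∃ a b, (1, sr a, sr b) ∈ Γ := by
  obtain ⟨⟨t, _, z⟩, hh, rfl⟩ := hsd.2.1 (sr 0)
  obtain ⟨k, hk⟩ := exists_mul_ofAdd_one_pow_eq_one t
  have hmul := mul_mem hh (pow_mem hg k)
  simp only [Prod.pow_mk, r_pow, Prod.mk_mul_mk, sr_mul_r, hk] at hmul
  generalize z * sr q ^ k = w at hmul
  rcases w with v | b
  · exact absurd hmul (h.one_sr_r_notMem hg ofAdd_one_zmod_four_sq_ne_one _ _)
  · exact ⟨_, _, hmul⟩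

theorem eq_zero_and_eq_zero_or_eq_two_and_eq_two (h : IsTwoInjective3 Γ)
    (hsd : IsSubdirect3 Γ) (hg : (ofAdd 1, r p, sr q) ∈ Γ) {u v : ZMod 4}
    (hγ : (1, r u, r v) ∈ Γ) : (u = 0 ∧ v = 0) ∨ (u = 2 ∧ v = 2) := by
  obtain ⟨_, _, _, hB⟩ := hsd.exists_sr_r_mem_of_r_sr_mem hg
  have h02 : ∀ z : ZMod 4, z + z = 0 → z = 0 ∨ z = 2 := by decide
  rcases h02 u (h.add_self_eq_zero_of_sr_r_mem_of_r_r_mem hB hγ) with rfl | rfl <;>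
    rcases h02 v (h.add_self_eq_zero_of_r_sr_mem_of_r_r_mem hg hγ) with rfl | rfl
  · exact .inl ⟨rfl, rfl⟩
  · exact absurd (h.snd_snd_eq_one hγ rfl r_zero) (by decide)
  · exact absurd (h.snd_fst_eq_one hγ rfl r_zero) (by decide)
  · exact .inr ⟨rfl, rfl⟩

theorem sub_add_sub_eq_two (h : IsTwoInjective3 Γ) (hg : (ofAdd 1, r p, sr q) ∈ Γ)
    (hk : (1, sr a, sr b) ∈ Γ) : (q - b) + (q - b) = 2 := by
  have hmul := mul_mem hk hg
  simp only [Prod.mk_mul_mk, one_mul, sr_mul_r, sr_mul_sr] at hmul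
  exact h.add_self_eq_two_of_sr_r_mem hmul

theorem one_r_two_r_two_eq (hp : p + p = 2) (ht : (q - b) + (q - b) = 2) :
    ((1, r 2, r 2) : Multiplicative (ZMod 4) × DihedralGroup 4 × DihedralGroup 4) =
      (ofAdd 1, r p, sr q) ^ 2 * ((1, sr a, sr b) * (ofAdd 1, r p, sr q)) ^ 2 := by
  simp only [sq, Prod.mk_mul_mk, one_mul, r_mul_r, sr_mul_r, sr_mul_sr, sub_self, hp, ht,
    add_zero, zero_add]
  rfl

theorem mem_closure_of_fst_eq_one (h : IsTwoInjective3 Γ) (hsd : IsSubdirect3 Γ)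
    (hg : (ofAdd 1, r p, sr q) ∈ Γ) (hk : (1, sr a, sr b) ∈ Γ)
    {γ : Multiplicative (ZMod 4) × DihedralGroup 4 × DihedralGroup 4} (hγ : γ ∈ Γ)
    (h1 : γ.1 = 1) : γ ∈ Subgroup.closure {(ofAdd 1, r p, sr q), (1, sr a, sr b)} := by
  set C := Subgroup.closure {((ofAdd 1, r p, sr q) :
    Multiplicative (ZMod 4) × DihedralGroup 4 × DihedralGroup 4), (1, sr a, sr b)}
  have hgC : (ofAdd 1, r p, sr q) ∈ C := Subgroup.subset_closure (Set.mem_insert _ _)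
  have hkC : (1, sr a, sr b) ∈ C := Subgroup.subset_closure (Set.mem_insert_of_mem _ rfl)
  have hmC : (1, r 2, r 2) ∈ C := by
    rw [one_r_two_r_two_eq (h.add_self_eq_two_of_r_sr_mem hg) (h.sub_add_sub_eq_two hg hk)]
    exact mul_mem (pow_mem hgC 2) (pow_mem (mul_mem hkC hgC) 2)
  obtain ⟨_, y, z⟩ := γ
  subst h1
  rcases y with u | u <;> rcases z with v | v
  · rcases h.eq_zero_and_eq_zero_or_eq_two_and_eq_two hsd hg hγ with ⟨rfl, rfl⟩ | ⟨rfl, rfl⟩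
    exacts [C.one_mem, hmC]
  · exact absurd hγ (h.one_r_sr_notMem hsd hg ofAdd_one_zmod_four_sq_ne_one _ _)
  · exact absurd hγ (h.one_sr_r_notMem hg ofAdd_one_zmod_four_sq_ne_one _ _)
  · have hmul := mul_mem hk hγ
    simp only [Prod.mk_mul_mk, one_mul, sr_mul_sr] at hmul
    rcases h.eq_zero_and_eq_zero_or_eq_two_and_eq_two hsd hg hmul with ⟨hu, hv⟩ | ⟨hu, hv⟩
    · rwa [sub_eq_zero.mp hu, sub_eq_zero.mp hv]
    · have h2 : ∀ x y : ZMod 4, x - y = 2 → x = y - 2 := by decide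
      rw [h2 u a hu, h2 v b hv, ← r_mul_sr, ← r_mul_sr, ← one_mul 1, ← Prod.mk_mul_mk,
        ← Prod.mk_mul_mk]
      exact mul_mem hmC hkC

theorem eq_closure (h : IsTwoInjective3 Γ) (hsd : IsSubdirect3 Γ)
    (hg : (ofAdd 1, r p, sr q) ∈ Γ) (hk : (1, sr a, sr b) ∈ Γ) :
    Γ = Subgroup.closure {(ofAdd 1, r p, sr q), (1, sr a, sr b)} := by
  refine le_antisymm (fun γ hγ ↦ ?_) ((Subgroup.closure_le _).mpr ?_)
  · obtain ⟨k, hk'⟩ := exists_mul_ofAdd_one_pow_eq_one γ.1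
    have hγ' := h.mem_closure_of_fst_eq_one hsd hg hk (mul_mem hγ (pow_mem hg k)) hk'
    simpa only [mul_inv_cancel_right] using
      mul_mem hγ' (inv_mem (pow_mem (Subgroup.subset_closure (Set.mem_insert _ _)) k))
  · rintro _ (rfl | rfl)
    exacts [hg, hk]

end IsTwoInjective3

theorem doubleCFI_inf_prod_eq_closure :
    doubleCFI ⊓ rotD4.prod ⊤ = Subgroup.closure {(r 1, r 1, sr 1), (1, sr 0, sr 0)} := by
  set C := Subgroup.closure {((r 1, r 1, sr 1) :
    DihedralGroup 4 × DihedralGroup 4 × DihedralGroup 4), (1, sr 0, sr 0)}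
  have hg : ((r 1, r 1, sr 1) : DihedralGroup 4 × DihedralGroup 4 × DihedralGroup 4) ∈ C :=
    Subgroup.subset_closure (Set.mem_insert _ _)
  have hk : ((1, sr 0, sr 0) : DihedralGroup 4 × DihedralGroup 4 × DihedralGroup 4) ∈ C :=
    Subgroup.subset_closure (Set.mem_insert_of_mem _ rfl)
  have hCrot : C ≤ rotD4.prod ⊤ := by
    rw [Subgroup.closure_le]
    rintro _ (rfl | rfl)
    exacts [⟨⟨1, rfl⟩, trivial⟩, ⟨⟨0, rfl⟩, trivial⟩]
  have hCΔ : C ≤ doubleCFI := by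
    rw [Subgroup.closure_le]
    rintro _ (rfl | rfl) <;> exact Subgroup.subset_closure (by simp)
  -- `Δ = C ∪ b C`, since `b` is an involution normalising `C`.
  set b : DihedralGroup 4 × DihedralGroup 4 × DihedralGroup 4 := (sr 0, 1, sr 0)
  have hbb : b * b = 1 := by decide
  have hconj : C ≤ C.comap (MulAut.conj b).toMonoidHom := by
    rw [Subgroup.closure_le]
    rintro _ (rfl | rfl)
    · show b * _ * b⁻¹ ∈ C
      rw [show b * (r 1, r 1, sr 1) * b⁻¹ =
        (1, sr 0, sr 0) * (r 1, r 1, sr 1) * (1, sr 0, sr 0) * (r 1, r 1, sr 1) ^ 2 by decide]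
      exact mul_mem (mul_mem (mul_mem hk hg) hk) (pow_mem hg 2)
    · show b * _ * b⁻¹ ∈ C
      rwa [show b * (1, sr 0, sr 0) * b⁻¹ = (1, sr 0, sr 0) by decide]
  have hconj' : ∀ z ∈ C, b * z * b ∈ C := fun z hz ↦ by
    have hbinv : b⁻¹ = b := by decide
    have hz' : b * z * b⁻¹ ∈ C := hconj hz
    rwa [hbinv] at hz'
  have hcoset : ∀ x ∈ doubleCFI, x ∈ C ∨ b * x ∈ C := by
    intro x hx
    induction hx using Subgroup.closure_induction with
    | mem x hx =>
      rcases hx with rfl | rfl | rfl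
      exacts [.inl hk, .inr (hbb ▸ C.one_mem), .inl hg]
    | one => exact .inl C.one_mem
    | mul x y _ _ hx hy =>
      rcases hx with hx | hx <;> rcases hy with hy | hy
      · exact .inl (mul_mem hx hy)
      · refine .inr ?_
        simpa only [mul_assoc, ← mul_assoc b b, hbb, one_mul] using mul_mem (hconj' x hx) hy
      · exact .inr (by simpa only [mul_assoc] using mul_mem hx hy)
      · refine .inl ?_
        simpa only [mul_assoc, ← mul_assoc b b, hbb, one_mul] using mul_mem (hconj' _ hx) hy
    | inv x _ hx =>
      rcases hx with hx | hx
      · exact .inl (inv_mem hx)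
      · refine .inr ?_
        simpa only [mul_inv_rev, mul_assoc, inv_mul_cancel, mul_one] using hconj' _ (inv_mem hx)
  refine le_antisymm (fun x ⟨hxΔ, hxrot⟩ ↦ (hcoset x hxΔ).resolve_right fun hbx ↦ ?_)
    (le_inf hCΔ hCrot)
  obtain ⟨⟨i, hi⟩, -⟩ := hCrot hbx
  obtain ⟨⟨j, hj⟩, -⟩ := hxrot
  simp [b, hj, sr_mul_r] at hi

theorem IsTwoInjective3.nonempty_mulEquiv_doubleCFI_inf_prod
    {Γ : Subgroup (Multiplicative (ZMod 4) × DihedralGroup 4 × DihedralGroup 4)}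
    (h : IsTwoInjective3 Γ) (hsd : IsSubdirect3 Γ) {p q : ZMod 4}
    (hg : (ofAdd 1, r p, sr q) ∈ Γ) :
    Nonempty (Γ ≃* ↥(doubleCFI ⊓ rotD4.prod (⊤ : Subgroup (DihedralGroup 4 × DihedralGroup 4)))) :=
    by
  obtain ⟨a, b, hk⟩ := h.exists_one_sr_sr_mem hsd hg
  have hodd : ∀ z : ZMod 4, z + z = 2 → z * z = 1 := by decide
  have hp := hodd p (h.add_self_eq_two_of_r_sr_mem hg)
  have ht := hodd (q - b) (h.sub_add_sub_eq_two hg hk)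
  set ψ := (rHom (n := 4)).prodMap
    ((affine p (-(p * a))).prodMap (affine (q - b) (-((q - b) * b))))
  have hψ : Function.Injective ψ :=
    rHom_injective.prodMap ((affine_injective (.of_mul_eq_one _ hp) _).prodMap
      (affine_injective (.of_mul_eq_one _ ht) _))
  have hψg : ψ (ofAdd 1, r p, sr q) = (r 1, r 1, sr 1) := by
    show (r 1, r (p * p), sr ((q - b) * q + -((q - b) * b))) = _
    rw [hp, ← ht]
    ring_nf
  have hψk : ψ (1, sr a, sr b) = (1, sr 0, sr 0) := by
    show (r 0, sr (p * a + -(p * a)), sr ((q - b) * b + -((q - b) * b))) = _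
    simp only [add_neg_cancel, r_zero]
  have hmap : Γ.map ψ = doubleCFI ⊓ rotD4.prod ⊤ := by
    rw [doubleCFI_inf_prod_eq_closure, h.eq_closure hsd hg hk, MonoidHom.map_closure,
      Set.image_pair, hψg, hψk]
  exact ⟨(Γ.equivMapOfInjective ψ hψ).trans (MulEquiv.subgroupCongr hmap)⟩

theorem statement_14 {n₂ n₃ : ℕ} (h₂ : 2 < n₂) (h₃ : 2 < n₃)
    (Γ : Subgroup (Multiplicative (ZMod 4) × DihedralGroup n₂ × DihedralGroup n₃))
    (hsd : IsSubdirect3 Γ) (h2inj : IsTwoInjective3 Γ) :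
    n₂ = 4 ∧ n₃ = 4 ∧
      Nonempty (Γ ≃* ↥
        (doubleCFI ⊓ rotD4.prod (⊤ : Subgroup (DihedralGroup 4 × DihedralGroup 4)))) := by
  obtain ⟨rfl, rfl, ⟨p, q, hg⟩ | ⟨q, p, hg⟩⟩ :=
    h2inj.eq_four_and_exists_mixed_mem hsd h₂ h₃ ofAdd_one_zmod_four_sq_ne_one
  · exact ⟨rfl, rfl, h2inj.nonempty_mulEquiv_doubleCFI_inf_prod hsd hg⟩
  · obtain ⟨e⟩ := h2inj.map_swapSndThd.nonempty_mulEquiv_doubleCFI_inf_prod hsd.map_swapSndThd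
      (mem_map_swapSndThd.mpr hg)
    exact ⟨rfl, rfl, ⟨((swapSndThd _ _ _).subgroupMap Γ).trans e⟩⟩
end

section
/- Let Γ ≤ C_{n₁} × D_{n₂} × D_{n₃} be a 2-injective 3-factor subdirect product. Then exactly one of the following holds: (1) n₁ ≤ 2, n₂, n₃ > 2, and the projection π̄₁(Γ) of Γ onto the two dihedral factors is a rotate-or-reflect group; (2) n₁ = n₂ = n₃ = 4 and Γ is isomorphic to Δ ∩ (rot(D₄) × D₄ × D₄), where Δ is the double CFI group; (3) n₁, n₂, n₃ ≤ 2 and Γ is abelian. Furthermore, for n > 2 there are no 2-injective 3-factor subdirect products of Dₙ × G₂ × G₃ when G₂ and G₃ are abelian groups. -/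
/-!
The cyclic factor is abelian, so by 2-injectivity a commutator in `Γ` is trivial as soon as it
is trivial in one dihedral factor; hence a factor is abelian whenever the other two are. This
rules out `n₂ > 2 ≥ n₃` (and symmetrically), gives case (3) and the final assertion, and the
exponent of `C_{n₁}` divides the lcm of the exponents of the dihedral factors.

For `n₂, n₃ > 2`, either no element of `Γ` is a rotation in one dihedral factor and a
reflection in the other, which is case (1) (conjugating by an element that is a reflection in
both factors shows `t² = 1` on `C_{n₁}`), or `Γ` contains elements of both mixed types. Then an
element rotating in both factors commutes, in the factor where the mixed element reflects, with
a reflection, so its rotation there has order at most 2. Applied to `u²` for `u ∈ Γ` with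
`u₂ = r 1` this gives `n₂ = 4`, similarly `n₃ = 4`, and it shows that `Γ` is generated by
`u = (·, r 1, sr b)` and `v = (·, sr c, r 1)`. The projection to `D₄ × D₄` is injective on `Γ`,
and an automorphism shifting the reflections moves its image onto that of
`Δ ∩ (rot(D₄) × D₄ × D₄) = ⟨(r 1, r 1, sr 1), (r 1, sr 1, r 1)⟩`.
-/

open DihedralGroup

section Dihedral

variable {n : ℕ} {x y : DihedralGroup n}

theorem isRotation_or_isReflection (x : DihedralGroup n) : IsRotation x ∨ IsReflection x := by
  cases x with
  | r i => exact Or.inl ⟨i, rfl⟩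
  | sr i => exact Or.inr ⟨i, rfl⟩

theorem IsRotation.mul (hx : IsRotation x) (hy : IsRotation y) : IsRotation (x * y) := by
  obtain ⟨i, rfl⟩ := hx
  obtain ⟨j, rfl⟩ := hy
  exact ⟨i + j, r_mul_r i j⟩

theorem IsReflection.mul (hx : IsReflection x) (hy : IsReflection y) : IsRotation (x * y) := by
  obtain ⟨i, rfl⟩ := hx
  obtain ⟨j, rfl⟩ := hy
  exact ⟨j - i, sr_mul_sr i j⟩

theorem IsReflection.mul_isRotation (hx : IsReflection x) (hy : IsRotation y) :
    IsReflection (x * y) := by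
  obtain ⟨i, rfl⟩ := hx
  obtain ⟨j, rfl⟩ := hy
  exact ⟨i + j, sr_mul_r i j⟩

theorem IsRotation.commute (hx : IsRotation x) (hy : IsRotation y) : Commute x y := by
  obtain ⟨i, rfl⟩ := hx
  obtain ⟨j, rfl⟩ := hy
  simp only [Commute, SemiconjBy, r_mul_r, add_comm]

theorem IsReflection.sq_eq_one (hx : IsReflection x) : x ^ 2 = 1 := by
  obtain ⟨i, rfl⟩ := hx
  rw [sq, sr_mul_self]

theorem IsReflection.mul_mul_inv_eq_inv (hy : IsReflection y) (hx : IsRotation x) :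
    y * x * y⁻¹ = x⁻¹ := by
  obtain ⟨j, rfl⟩ := hy
  obtain ⟨i, rfl⟩ := hx
  simp only [DihedralGroup.inv_sr, DihedralGroup.inv_r, sr_mul_r, sr_mul_sr]
  congr 1
  ring

namespace DihedralGroup

theorem commute_sr_r_iff (i j : ZMod n) : Commute (sr j) (r i) ↔ i + i = 0 := by
  simp only [Commute, SemiconjBy, sr_mul_r, r_mul_sr, sr.injEq]
  constructor <;> intro h <;> linear_combination h

theorem le_two_of_forall_commute (h : ∀ x y : DihedralGroup n, Commute x y) : n ≤ 2 := by
  have := commutative_iff.mp ⟨⟨fun x y => (h x y).eq⟩⟩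
  omega

theorem commute_of_le_two (h0 : 0 < n) (h2 : n ≤ 2) (x y : DihedralGroup n) : Commute x y := by
  have : IsMulCommutative (DihedralGroup n) := commutative_iff.mpr (by omega)
  exact Std.Commutative.comm x y

def shiftReflections (k : ZMod n) : DihedralGroup n ≃* DihedralGroup n where
  toFun
    | r i => r i
    | sr i => sr (i + k)
  invFun
    | r i => r i
    | sr i => sr (i - k)
  left_inv := by rintro (i | i) <;> simp
  right_inv := by rintro (i | i) <;> simp
  map_mul' := by
    rintro (i | i) (j | j) <;> simp only [r_mul_r, r_mul_sr, sr_mul_r, sr_mul_sr] <;> congr 1 <;>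
      ring

end DihedralGroup

end Dihedral

theorem Subgroup.nonempty_mulEquiv_map_of_injOn {G N : Type*} [Group G] [Group N]
    (H : Subgroup G) (f : G →* N) (hf : Set.InjOn f H) : Nonempty (H ≃* H.map f) := by
  have hinj : Function.Injective (f.comp H.subtype) := fun a b h => Subtype.ext (hf a.2 b.2 h)
  refine ⟨(MonoidHom.ofInjective hinj).trans (MulEquiv.subgroupCongr ?_)⟩
  rw [MonoidHom.range_comp, Subgroup.range_subtype]

section ThreeFactors

variable {G₁ G₂ G₃ : Type*} [Group G₁] [Group G₂] [Group G₃] {Γ : Subgroup (G₁ × G₂ × G₃)}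
  {g k : G₁ × G₂ × G₃}

namespace IsTwoInjective3

theorem injOn_snd (hΓ : IsTwoInjective3 Γ) : Set.InjOn (MonoidHom.snd G₁ (G₂ × G₃)) Γ :=
  fun g hg k hk h => hΓ.1 g hg k hk (congrArg Prod.fst h) (congrArg Prod.snd h)

theorem eq_one_of₂₃ (hΓ : IsTwoInjective3 Γ) (hg : g ∈ Γ) (h₂ : g.2.1 = 1) (h₃ : g.2.2 = 1) :
    g = 1 :=
  hΓ.1 g hg 1 (one_mem Γ) h₂ h₃

theorem eq_one_of₁₃ (hΓ : IsTwoInjective3 Γ) (hg : g ∈ Γ) (h₁ : g.1 = 1) (h₃ : g.2.2 = 1) :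
    g = 1 :=
  hΓ.2.1 g hg 1 (one_mem Γ) h₁ h₃

theorem commute_of_commute₂₃ (hΓ : IsTwoInjective3 Γ) (hg : g ∈ Γ) (hk : k ∈ Γ)
    (h₂ : Commute g.2.1 k.2.1) (h₃ : Commute g.2.2 k.2.2) : Commute g k :=
  hΓ.1 _ (mul_mem hg hk) _ (mul_mem hk hg) h₂.eq h₃.eq

theorem commute_of_commute₁₃ (hΓ : IsTwoInjective3 Γ) (hg : g ∈ Γ) (hk : k ∈ Γ)
    (h₁ : Commute g.1 k.1) (h₃ : Commute g.2.2 k.2.2) : Commute g k :=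
  hΓ.2.1 _ (mul_mem hg hk) _ (mul_mem hk hg) h₁.eq h₃.eq

theorem commute_of_commute₁₂ (hΓ : IsTwoInjective3 Γ) (hg : g ∈ Γ) (hk : k ∈ Γ)
    (h₁ : Commute g.1 k.1) (h₂ : Commute g.2.1 k.2.1) : Commute g k :=
  hΓ.2.2 _ (mul_mem hg hk) _ (mul_mem hk hg) h₁.eq h₂.eq

end IsTwoInjective3

namespace IsSubdirect3

theorem commute₁ (hΓ : IsSubdirect3 Γ) (hcomm : ∀ g ∈ Γ, ∀ k ∈ Γ, Commute g k) (x y : G₁) :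
    Commute x y := by
  obtain ⟨g, hg, rfl⟩ := hΓ.1 x
  obtain ⟨k, hk, rfl⟩ := hΓ.1 y
  exact congrArg (·.1) (hcomm g hg k hk).eq

theorem commute₂ (hΓ : IsSubdirect3 Γ) (hcomm : ∀ g ∈ Γ, ∀ k ∈ Γ, Commute g k) (x y : G₂) :
    Commute x y := by
  obtain ⟨g, hg, rfl⟩ := hΓ.2.1 x
  obtain ⟨k, hk, rfl⟩ := hΓ.2.1 y
  exact congrArg (·.2.1) (hcomm g hg k hk).eq

theorem commute₃ (hΓ : IsSubdirect3 Γ) (hcomm : ∀ g ∈ Γ, ∀ k ∈ Γ, Commute g k) (x y : G₃) :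
    Commute x y := by
  obtain ⟨g, hg, rfl⟩ := hΓ.2.2 x
  obtain ⟨k, hk, rfl⟩ := hΓ.2.2 y
  exact congrArg (·.2.2) (hcomm g hg k hk).eq

end IsSubdirect3

theorem IsSubdirect3.exponent_dvd (hsd : IsSubdirect3 Γ) (hinj : IsTwoInjective3 Γ) :
    Monoid.exponent G₁ ∣ lcm (Monoid.exponent G₂) (Monoid.exponent G₃) := by
  have hfst : Function.Surjective ((MonoidHom.fst G₁ (G₂ × G₃)).comp Γ.subtype) := fun x =>
    let ⟨g, hg, hgx⟩ := hsd.1 x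
    ⟨⟨g, hg⟩, hgx⟩
  have hsnd : Function.Injective ((MonoidHom.snd G₁ (G₂ × G₃)).comp Γ.subtype) :=
    fun g k h => Subtype.ext (hinj.injOn_snd g.2 k.2 h)
  rw [← Monoid.exponent_prod]
  exact (MonoidHom.exponent_dvd hfst).trans (Monoid.exponent_dvd_of_monoidHom _ hsnd)

def Subgroup.swap₂₃ (Γ : Subgroup (G₁ × G₂ × G₃)) : Subgroup (G₁ × G₃ × G₂) :=
  Γ.comap ((MulEquiv.refl G₁).prodCongr (MulEquiv.prodComm)).toMonoidHom

theorem IsSubdirect3.swap₂₃ (hΓ : IsSubdirect3 Γ) : IsSubdirect3 Γ.swap₂₃ := by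
  refine ⟨fun x => ?_, fun x => ?_, fun x => ?_⟩
  · obtain ⟨g, hg, rfl⟩ := hΓ.1 x
    exact ⟨(g.1, g.2.2, g.2.1), hg, rfl⟩
  · obtain ⟨g, hg, rfl⟩ := hΓ.2.2 x
    exact ⟨(g.1, g.2.2, g.2.1), hg, rfl⟩
  · obtain ⟨g, hg, rfl⟩ := hΓ.2.1 x
    exact ⟨(g.1, g.2.2, g.2.1), hg, rfl⟩

theorem IsTwoInjective3.swap₂₃ (hΓ : IsTwoInjective3 Γ) : IsTwoInjective3 Γ.swap₂₃ := by
  refine ⟨fun g hg k hk h₂ h₃ => ?_, fun g hg k hk h₁ h₃ => ?_, fun g hg k hk h₁ h₂ => ?_⟩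
  · have := hΓ.1 _ hg _ hk h₃ h₂
    simp_all [Prod.ext_iff]
  · have := hΓ.2.2 _ hg _ hk h₁ h₃
    simp_all [Prod.ext_iff]
  · have := hΓ.2.1 _ hg _ hk h₁ h₂
    simp_all [Prod.ext_iff]

end ThreeFactors

section CyclicDihedralDihedral

variable {G : Type*} [CommGroup G] {m n : ℕ} {Γ : Subgroup (G × DihedralGroup m × DihedralGroup n)}

theorem isRotateOrReflect2_map_snd_iff :
    IsRotateOrReflect2 (Γ.map (MonoidHom.snd G _)) ↔ ∀ g ∈ Γ,
      (IsRotation g.2.1 ∧ IsRotation g.2.2) ∨ (IsReflection g.2.1 ∧ IsReflection g.2.2) :=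
  ⟨fun h g hg => h _ ⟨g, hg, rfl⟩, by rintro h _ ⟨g, hg, rfl⟩; exact h g hg⟩

theorem exponent_dvd_two_of_isRotateOrReflect2 (hsd : IsSubdirect3 Γ) (hinj : IsTwoInjective3 Γ)
    (hΓ : IsRotateOrReflect2 (Γ.map (MonoidHom.snd G _))) : Monoid.exponent G ∣ 2 := by
  rw [isRotateOrReflect2_map_snd_iff] at hΓ
  refine Monoid.exponent_dvd_of_forall_pow_eq_one fun t => ?_
  obtain ⟨g, hg, rfl⟩ := hsd.1 t
  rcases hΓ g hg with ⟨h₂, h₃⟩ | ⟨h₂, h₃⟩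
  · obtain ⟨γ, hγ, hγ₂⟩ := hsd.2.1 (sr 0)
    obtain ⟨hγ₂', hγ₃⟩ : IsReflection γ.2.1 ∧ IsReflection γ.2.2 := by
      refine (hΓ γ hγ).resolve_left fun ⟨⟨i, hi⟩, _⟩ => ?_
      rw [hγ₂] at hi
      cases hi
    -- conjugation by `γ` inverts both dihedral components of `g` and fixes the cyclic one
    have hw := hinj.eq_one_of₂₃ (mul_mem hg (mul_mem (mul_mem hγ hg) (inv_mem hγ)))
      (by simp [hγ₂'.mul_mul_inv_eq_inv h₂]) (by simp [hγ₃.mul_mul_inv_eq_inv h₃])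
    calc g.1 ^ 2 = (g * (γ * g * γ⁻¹)).1 := by simp [sq]
      _ = 1 := by rw [hw]; rfl
  · exact congrArg Prod.fst (hinj.eq_one_of₂₃ (pow_mem hg 2) h₂.sq_eq_one h₃.sq_eq_one)

theorem exists_isReflection_isRotation (hsd : IsSubdirect3 Γ)
    (hΓ : ¬IsRotateOrReflect2 (Γ.map (MonoidHom.snd G _))) :
    ∃ v ∈ Γ, IsReflection v.2.1 ∧ IsRotation v.2.2 := by
  rw [isRotateOrReflect2_map_snd_iff] at hΓ
  push Not at hΓ
  obtain ⟨g, hg, hrot, hrefl⟩ := hΓ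
  rcases isRotation_or_isReflection g.2.1 with h₂ | h₂
  · have h₃ := (isRotation_or_isReflection g.2.2).resolve_left (hrot h₂)
    obtain ⟨e, he, he₂⟩ := hsd.2.1 (sr 0)
    rcases isRotation_or_isReflection e.2.2 with he₃ | he₃
    · exact ⟨e, he, ⟨0, he₂⟩, he₃⟩
    · exact ⟨e * g, mul_mem he hg, IsReflection.mul_isRotation ⟨0, he₂⟩ h₂, he₃.mul h₃⟩
  · exact ⟨g, hg, h₂, (isRotation_or_isReflection g.2.2).resolve_right (hrefl h₂)⟩

theorem not_isRotateOrReflect2_swap₂₃ (hΓ : ¬IsRotateOrReflect2 (Γ.map (MonoidHom.snd G _))) :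
    ¬IsRotateOrReflect2 (Γ.swap₂₃.map (MonoidHom.snd G _)) := by
  rw [isRotateOrReflect2_map_snd_iff] at hΓ ⊢
  exact fun h => hΓ fun g hg => by simpa only [and_comm] using h (g.1, g.2.2, g.2.1) hg

theorem add_self_eq_zero_of_isRotation (hinj : IsTwoInjective3 Γ)
    {v k : G × DihedralGroup m × DihedralGroup n} (hv : v ∈ Γ) (hv₂ : IsReflection v.2.1)
    (hv₃ : IsRotation v.2.2) (hk : k ∈ Γ) {i : ZMod m} (hk₂ : k.2.1 = r i)
    (hk₃ : IsRotation k.2.2) : i + i = 0 := by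
  obtain ⟨j, hj⟩ := hv₂
  have h := congrArg (·.2.1)
    (hinj.commute_of_commute₁₃ hv hk (Commute.all _ _) (hv₃.commute hk₃)).eq
  simp only [Prod.snd_mul, Prod.fst_mul, hj, hk₂] at h
  exact (commute_sr_r_iff i j).1 h

theorem exists_snd_eq_r_one (hsd : IsSubdirect3 Γ) (hinj : IsTwoInjective3 Γ) (hm : 2 < m)
    (hv : ∃ v ∈ Γ, IsReflection v.2.1 ∧ IsRotation v.2.2) :
    ∃ u ∈ Γ, u.2.1 = r 1 ∧ IsReflection u.2.2 := by
  obtain ⟨v, hv, hv₂, hv₃⟩ := hv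
  obtain ⟨u, hu, hu₂⟩ := hsd.2.1 (r 1)
  refine ⟨u, hu, hu₂, (isRotation_or_isReflection _).resolve_left fun hu₃ => ?_⟩
  have h := add_self_eq_zero_of_isRotation hinj hv hv₂ hv₃ hu hu₂ hu₃
  have : m ∣ 2 := (ZMod.natCast_eq_zero_iff 2 m).1 (by push_cast; linear_combination h)
  have := Nat.le_of_dvd two_pos this
  omega

theorem eq_four_of_exists_isReflection_isRotation (hsd : IsSubdirect3 Γ)
    (hinj : IsTwoInjective3 Γ) (hm : 2 < m)
    (hv : ∃ v ∈ Γ, IsReflection v.2.1 ∧ IsRotation v.2.2) : m = 4 := by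
  obtain ⟨u, hu, hu₂, hu₃⟩ := exists_snd_eq_r_one hsd hinj hm hv
  obtain ⟨v, hv, hv₂, hv₃⟩ := hv
  have h := add_self_eq_zero_of_isRotation hinj hv hv₂ hv₃ (pow_mem hu 2) (i := 2)
    (by simp [hu₂]) ⟨0, by simp [hu₃.sq_eq_one]⟩
  have hdvd : m ∣ 4 := (ZMod.natCast_eq_zero_iff 4 m).1 (by push_cast; linear_combination h)
  have := Nat.le_of_dvd four_pos hdvd
  interval_cases m <;> simp_all

end CyclicDihedralDihedral

section DoubleCFI

local notation "D₄³" => DihedralGroup 4 × DihedralGroup 4 × DihedralGroup 4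

def cfiU : D₄³ := (r 1, r 1, sr 1)

def cfiV : D₄³ := (r 1, sr 1, r 1)

def doubleCFIElems : Finset D₄³ :=
  Finset.univ.image fun p : Fin 2 × Fin 4 × Fin 4 =>
    (sr 0, 1, sr 0) ^ (p.1 : ℕ) * cfiU ^ (p.2.1 : ℕ) * cfiV ^ (p.2.2 : ℕ)

set_option maxRecDepth 10000 in
theorem mem_doubleCFIElems {x : D₄³} (hx : x ∈ doubleCFI) : x ∈ doubleCFIElems := by
  have hgen : ∀ x ∈ doubleCFIElems,
      ∀ y ∈ ({(1, sr 0, sr 0), (sr 0, 1, sr 0), (r 1, r 1, sr 1)} : Finset D₄³),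
      x * y ∈ doubleCFIElems ∧ x * y⁻¹ ∈ doubleCFIElems := by
    decide
  induction hx using Subgroup.closure_induction_right with
  | one => decide
  | mul_right x _ y hy ih => exact (hgen x ih y (by simpa using hy)).1
  | mul_inv_cancel x _ y hy ih => exact (hgen x ih y (by simpa using hy)).2

theorem cfiU_mem : cfiU ∈ doubleCFI ⊓ rotD4.prod ⊤ :=
  ⟨Subgroup.subset_closure (by simp [cfiU]), ⟨1, rfl⟩, trivial⟩

theorem cfiV_mem : cfiV ∈ doubleCFI ⊓ rotD4.prod ⊤ := by
  have h : ((1, sr 0, sr 0) : D₄³) * cfiU ∈ doubleCFI :=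
    mul_mem (Subgroup.subset_closure (by simp)) cfiU_mem.1
  exact ⟨h, ⟨1, rfl⟩, trivial⟩

set_option maxRecDepth 10000 in
theorem exists_eq_of_mem_doubleCFI_inf {x : D₄³} (hx : x ∈ doubleCFI ⊓ rotD4.prod ⊤) :
    ∃ a b : Fin 4, cfiU ^ (a : ℕ) * cfiV ^ (b : ℕ) = x := by
  have key : ∀ x ∈ doubleCFIElems, (∃ i, x.1 = r i) →
      ∃ a b : Fin 4, cfiU ^ (a : ℕ) * cfiV ^ (b : ℕ) = x := by
    decide
  exact key x (mem_doubleCFIElems hx.1) hx.2.1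

theorem doubleCFI_inf_eq_closure :
    doubleCFI ⊓ rotD4.prod ⊤ = Subgroup.closure {cfiU, cfiV} := by
  refine le_antisymm (fun x hx => ?_) ((Subgroup.closure_le _).2 ?_)
  · obtain ⟨a, b, rfl⟩ := exists_eq_of_mem_doubleCFI_inf hx
    exact mul_mem (pow_mem (Subgroup.subset_closure (by simp)) _)
      (pow_mem (Subgroup.subset_closure (by simp)) _)
  · exact Set.insert_subset_iff.2 ⟨cfiU_mem, Set.singleton_subset_iff.2 cfiV_mem⟩

theorem injOn_snd_doubleCFI_inf :
    Set.InjOn (MonoidHom.snd (DihedralGroup 4) (DihedralGroup 4 × DihedralGroup 4))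
      (doubleCFI ⊓ rotD4.prod ⊤ : Subgroup D₄³) := by
  have key : ∀ a b c d : Fin 4,
      (cfiU ^ (a : ℕ) * cfiV ^ (b : ℕ)).2 = (cfiU ^ (c : ℕ) * cfiV ^ (d : ℕ)).2 →
        cfiU ^ (a : ℕ) * cfiV ^ (b : ℕ) = cfiU ^ (c : ℕ) * cfiV ^ (d : ℕ) := by
    decide
  intro x hx y hy hxy
  obtain ⟨a, b, rfl⟩ := exists_eq_of_mem_doubleCFI_inf hx
  obtain ⟨c, d, rfl⟩ := exists_eq_of_mem_doubleCFI_inf hy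
  exact key a b c d hxy

end DoubleCFI

section CyclicD4D4

variable {G : Type*} [CommGroup G] {Γ : Subgroup (G × DihedralGroup 4 × DihedralGroup 4)}
  {u v : G × DihedralGroup 4 × DihedralGroup 4} {b c : ZMod 4}

theorem eq_closure_of_snd_eq (hinj : IsTwoInjective3 Γ) (hu : u ∈ Γ) (hv : v ∈ Γ)
    (hu₂₃ : u.2 = (r 1, sr b)) (hv₂₃ : v.2 = (sr c, r 1)) : Γ = Subgroup.closure {u, v} := by
  set H := Subgroup.closure {u, v}
  have huH : u ∈ H := Subgroup.subset_closure (by simp)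
  have hvH : v ∈ H := Subgroup.subset_closure (by simp)
  obtain ⟨hu₂, hu₃⟩ := Prod.ext_iff.1 hu₂₃
  obtain ⟨hv₂, hv₃⟩ := Prod.ext_iff.1 hv₂₃
  have hrot : ∀ k ∈ Γ, IsRotation k.2.1 → IsRotation k.2.2 → k ∈ H := by
    rintro k hk ⟨i, hi⟩ ⟨j, hj⟩
    have hi2 : i + i = 0 := add_self_eq_zero_of_isRotation hinj hv ⟨c, hv₂⟩ ⟨1, hv₃⟩ hk hi ⟨j, hj⟩
    have hj2 : j + j = 0 := add_self_eq_zero_of_isRotation hinj.swap₂₃ (v := (u.1, u.2.2, u.2.1))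
      (k := (k.1, k.2.2, k.2.1)) hu ⟨b, hu₃⟩ ⟨1, hu₂⟩ hk hj ⟨i, hi⟩
    -- `i, j ∈ {0, 2}`, so on `D₄ × D₄` the element `k` is a word in `u²` and `v²`
    have key : ∀ b c i j : ZMod 4, i + i = 0 → j + j = 0 → ∃ x y : Fin 2,
        (((r 1, sr b) ^ 2) ^ (x : ℕ) * ((sr c, r 1) ^ 2) ^ (y : ℕ) :
          DihedralGroup 4 × DihedralGroup 4) = (r i, r j) := by
      decide
    obtain ⟨x, y, hxy⟩ := key b c i j hi2 hj2
    have hw : (u ^ 2) ^ (x : ℕ) * (v ^ 2) ^ (y : ℕ) ∈ H :=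
      mul_mem (pow_mem (pow_mem huH 2) _) (pow_mem (pow_mem hvH 2) _)
    have hwk : (u ^ 2) ^ (x : ℕ) * (v ^ 2) ^ (y : ℕ) = k := by
      refine hinj.injOn_snd (mul_mem (pow_mem (pow_mem hu 2) _) (pow_mem (pow_mem hv 2) _)) hk ?_
      change (u.2 ^ 2) ^ (x : ℕ) * (v.2 ^ 2) ^ (y : ℕ) = k.2
      rw [hu₂₃, hv₂₃, hxy]
      exact Prod.ext hi.symm hj.symm
    exact hwk ▸ hw
  have hrot₂ : ∀ k ∈ Γ, IsRotation k.2.1 → k ∈ H := by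
    intro k hk h₂
    rcases isRotation_or_isReflection k.2.2 with h₃ | h₃
    · exact hrot k hk h₂ h₃
    · exact (H.mul_mem_cancel_right huH).1
        (hrot _ (mul_mem hk hu) (h₂.mul ⟨1, hu₂⟩) (h₃.mul ⟨b, hu₃⟩))
  refine le_antisymm (fun k hk => ?_)
    ((Subgroup.closure_le _).2 (Set.insert_subset_iff.2 ⟨hu, Set.singleton_subset_iff.2 hv⟩))
  rcases isRotation_or_isReflection k.2.1 with h₂ | h₂
  · exact hrot₂ k hk h₂
  · exact (H.mul_mem_cancel_right hvH).1 (hrot₂ _ (mul_mem hk hv) (h₂.mul ⟨c, hv₂⟩))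

theorem exponent_eq_four (hsd : IsSubdirect3 Γ) (hinj : IsTwoInjective3 Γ) (hu : u ∈ Γ)
    (hu₂₃ : u.2 = (r 1, sr b)) : Monoid.exponent G = 4 := by
  have h4 : Monoid.exponent G ∣ 4 := by
    simpa [DihedralGroup.exponent, show (lcm 4 2 : ℕ) = 4 by decide] using hsd.exponent_dvd hinj
  have h2 : ¬Monoid.exponent G ∣ 2 := fun h => by
    have hu1 := hinj.eq_one_of₁₃ (pow_mem hu 2) (Monoid.exponent_dvd_iff_forall_pow_eq_one.1 h u.1)
      (by change u.2.2 ^ 2 = 1; simp [hu₂₃, sq])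
    have : u.2.1 ^ 2 = 1 := congrArg (·.2.1) hu1
    rw [hu₂₃, r_one_pow] at this
    exact absurd this (by decide)
  have := Nat.le_of_dvd four_pos h4
  interval_cases h : Monoid.exponent G <;> simp_all

theorem nonempty_mulEquiv_doubleCFI_inf (hinj : IsTwoInjective3 Γ) (hu : u ∈ Γ) (hv : v ∈ Γ)
    (hu₂₃ : u.2 = (r 1, sr b)) (hv₂₃ : v.2 = (sr c, r 1)) :
    Nonempty (Γ ≃* (doubleCFI ⊓ rotD4.prod ⊤ : Subgroup _)) := by
  let ψ : DihedralGroup 4 × DihedralGroup 4 ≃* DihedralGroup 4 × DihedralGroup 4 :=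
    (shiftReflections (1 - c)).prodCongr (shiftReflections (1 - b))
  have hψ : (Γ.map (MonoidHom.snd _ _)).map (ψ : _ →* _) =
      (doubleCFI ⊓ rotD4.prod ⊤).map (MonoidHom.snd _ _) := by
    rw [eq_closure_of_snd_eq hinj hu hv hu₂₃ hv₂₃, doubleCFI_inf_eq_closure,
      MonoidHom.map_closure, MonoidHom.map_closure, MonoidHom.map_closure,
      Set.image_pair, Set.image_pair, Set.image_pair]
    have hψu : (ψ : _ →* _) u.2 = cfiU.2 := by
      rw [hu₂₃]
      change ((r 1, sr (b + (1 - b))) : DihedralGroup 4 × DihedralGroup 4) = (r 1, sr 1)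
      rw [add_sub_cancel]
    have hψv : (ψ : _ →* _) v.2 = cfiV.2 := by
      rw [hv₂₃]
      change ((sr (c + (1 - c)), r 1) : DihedralGroup 4 × DihedralGroup 4) = (sr 1, r 1)
      rw [add_sub_cancel]
    exact congrArg₂ (fun x y => Subgroup.closure {x, y}) hψu hψv
  obtain ⟨e₁⟩ := Γ.nonempty_mulEquiv_map_of_injOn _ hinj.injOn_snd
  obtain ⟨e₂⟩ := Subgroup.nonempty_mulEquiv_map_of_injOn _ _ injOn_snd_doubleCFI_inf
  exact ⟨e₁.trans ((ψ.subgroupMap _).trans ((MulEquiv.subgroupCongr hψ).trans e₂.symm))⟩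

theorem exponent_eq_four_and_nonempty_mulEquiv (hsd : IsSubdirect3 Γ) (hinj : IsTwoInjective3 Γ)
    (hΓ : ¬IsRotateOrReflect2 (Γ.map (MonoidHom.snd G _))) :
    Monoid.exponent G = 4 ∧ Nonempty (Γ ≃* (doubleCFI ⊓ rotD4.prod ⊤ : Subgroup _)) := by
  obtain ⟨u, hu, hu₂, b, hu₃⟩ := exists_snd_eq_r_one hsd hinj (by norm_num)
    (exists_isReflection_isRotation hsd hΓ)
  obtain ⟨v, hv, hv₃, c, hv₂⟩ := exists_snd_eq_r_one hsd.swap₂₃ hinj.swap₂₃ (by norm_num)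
    (exists_isReflection_isRotation hsd.swap₂₃ (not_isRotateOrReflect2_swap₂₃ hΓ))
  have hu₂₃ : u.2 = (r 1, sr b) := Prod.ext hu₂ hu₃
  exact ⟨exponent_eq_four hsd hinj hu hu₂₃, nonempty_mulEquiv_doubleCFI_inf hinj hu
    (v := (v.1, v.2.2, v.2.1)) hv hu₂₃ (Prod.ext hv₂ hv₃)⟩

end CyclicD4D4

theorem statement_15_general {n₁ n₂ n₃ : ℕ} (hp₂ : 0 < n₂) (hp₃ : 0 < n₃)
    (Γ : Subgroup (Multiplicative (ZMod n₁) × DihedralGroup n₂ × DihedralGroup n₃))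
    (hsd : IsSubdirect3 Γ) (h2inj : IsTwoInjective3 Γ) :
    (let P₁ : Prop := n₁ ≤ 2 ∧ 2 < n₂ ∧ 2 < n₃ ∧
        IsRotateOrReflect2 (Γ.map (MonoidHom.snd (Multiplicative (ZMod n₁))
          (DihedralGroup n₂ × DihedralGroup n₃)))
     let P₂ : Prop := (n₁ = 4 ∧ n₂ = 4 ∧ n₃ = 4) ∧
        Nonempty (Γ ≃* ↥
          (doubleCFI ⊓ rotD4.prod (⊤ : Subgroup (DihedralGroup 4 × DihedralGroup 4))))
     let P₃ : Prop := (n₁ ≤ 2 ∧ n₂ ≤ 2 ∧ n₃ ≤ 2) ∧ ∀ g ∈ Γ, ∀ h ∈ Γ, g * h = h * g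
     (P₁ ∨ P₂ ∨ P₃) ∧ (P₁ → ¬P₂ ∧ ¬P₃) ∧ (P₂ → ¬P₁ ∧ ¬P₃) ∧ (P₃ → ¬P₁ ∧ ¬P₂)) ∧
    (∀ (n : ℕ), 2 < n → ∀ (G₂ G₃ : Type) [CommGroup G₂] [CommGroup G₃],
      ¬ ∃ Γ' : Subgroup (DihedralGroup n × G₂ × G₃),
          IsSubdirect3 Γ' ∧ IsTwoInjective3 Γ') := by
  have hexp : Monoid.exponent (Multiplicative (ZMod n₁)) = n₁ := ZMod.exponent n₁
  refine ⟨?_, fun n hn G₂ G₃ _ _ ⟨Γ', hsd', hinj'⟩ => ?_⟩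
  · intro P₁ P₂ P₃
    have key : P₁ ∨ P₂ ∨ P₃ := by
      rcases le_or_gt n₂ 2 with h₂ | h₂ <;> rcases le_or_gt n₃ 2 with h₃ | h₃
      · have h := hsd.exponent_dvd h2inj
        rw [hexp, DihedralGroup.exponent, DihedralGroup.exponent] at h
        refine Or.inr (Or.inr ⟨⟨?_, h₂, h₃⟩, fun g hg k hk => (h2inj.commute_of_commute₂₃ hg hk
          (commute_of_le_two hp₂ h₂ _ _) (commute_of_le_two hp₃ h₃ _ _)).eq⟩)
        interval_cases n₂ <;> interval_cases n₃ <;> exact Nat.le_of_dvd two_pos h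
      · have := le_two_of_forall_commute (hsd.commute₃ fun g hg k hk =>
          h2inj.commute_of_commute₁₂ hg hk (Commute.all _ _) (commute_of_le_two hp₂ h₂ _ _))
        omega
      · have := le_two_of_forall_commute (hsd.commute₂ fun g hg k hk =>
          h2inj.commute_of_commute₁₃ hg hk (Commute.all _ _) (commute_of_le_two hp₃ h₃ _ _))
        omega
      · by_cases hΓ : IsRotateOrReflect2 (Γ.map (MonoidHom.snd _ _))
        · have h := exponent_dvd_two_of_isRotateOrReflect2 hsd h2inj hΓ
          exact Or.inl ⟨hexp ▸ Nat.le_of_dvd two_pos h, h₂, h₃, hΓ⟩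
        obtain rfl := eq_four_of_exists_isReflection_isRotation hsd h2inj h₂
          (exists_isReflection_isRotation hsd hΓ)
        obtain rfl := eq_four_of_exists_isReflection_isRotation hsd.swap₂₃ h2inj.swap₂₃ h₃
          (exists_isReflection_isRotation hsd.swap₂₃ (not_isRotateOrReflect2_swap₂₃ hΓ))
        obtain ⟨h₁, hΓΔ⟩ := exponent_eq_four_and_nonempty_mulEquiv hsd h2inj hΓ
        exact Or.inr (Or.inl ⟨⟨hexp ▸ h₁, rfl, rfl⟩, hΓΔ⟩)
    refine ⟨key, fun h => ⟨fun h' => ?_, fun h' => ?_⟩, fun h => ⟨fun h' => ?_, fun h' => ?_⟩,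
      fun h => ⟨fun h' => ?_, fun h' => ?_⟩⟩ <;> omega
  · have := le_two_of_forall_commute (hsd'.commute₁ fun g hg k hk =>
      hinj'.commute_of_commute₂₃ hg hk (Commute.all _ _) (Commute.all _ _))
    omega

theorem statement_15 {n₁ n₂ n₃ : ℕ} (hp₁ : 0 < n₁) (hp₂ : 0 < n₂) (hp₃ : 0 < n₃)
    (Γ : Subgroup (Multiplicative (ZMod n₁) × DihedralGroup n₂ × DihedralGroup n₃))
    (hsd : IsSubdirect3 Γ) (h2inj : IsTwoInjective3 Γ) :
    (let P₁ : Prop := n₁ ≤ 2 ∧ 2 < n₂ ∧ 2 < n₃ ∧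
        IsRotateOrReflect2 (Γ.map (MonoidHom.snd (Multiplicative (ZMod n₁))
          (DihedralGroup n₂ × DihedralGroup n₃)))
     let P₂ : Prop := (n₁ = 4 ∧ n₂ = 4 ∧ n₃ = 4) ∧
        Nonempty (Γ ≃* ↥
          (doubleCFI ⊓ rotD4.prod (⊤ : Subgroup (DihedralGroup 4 × DihedralGroup 4))))
     let P₃ : Prop := (n₁ ≤ 2 ∧ n₂ ≤ 2 ∧ n₃ ≤ 2) ∧ ∀ g ∈ Γ, ∀ h ∈ Γ, g * h = h * g
     (P₁ ∨ P₂ ∨ P₃) ∧ (P₁ → ¬P₂ ∧ ¬P₃) ∧ (P₂ → ¬P₁ ∧ ¬P₃) ∧ (P₃ → ¬P₁ ∧ ¬P₂)) ∧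
    (∀ (n : ℕ), 2 < n → ∀ (G₂ G₃ : Type) [CommGroup G₂] [CommGroup G₃],
      ¬ ∃ Γ' : Subgroup (DihedralGroup n × G₂ × G₃),
          IsSubdirect3 Γ' ∧ IsTwoInjective3 Γ') :=
  statement_15_general hp₂ hp₃ Γ hsd h2inj
end
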